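/- arXiv:1312.5712 — 3 statements merged into one kernel-verified Lean document; each statement's English description precedes it below -/
import Mathlib

section
/- For every x > 0, the improper integral ∫₀^∞ e^{-ζ/x}/(1+ζ) dζ converges, and the function f(x) = ∫₀^∞ e^{-ζ/x}/(1+ζ) dζ is differentiable on (0,∞) and satisfies the Euler differential equation x² f'(x) + f(x) = x for all x > 0. -/
/-! Since `x² ∂ₓ e^{-ζ/x} = ζ e^{-ζ/x}`, differentiating under the integral sign gives
`x² f'(x) + f(x) = ∫₀^∞ e^{-ζ/x} (ζ + 1)/(1 + ζ) dζ = x`. Differentiation under the integral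
is justified for any bounded weight `g` in place of `1/(1+ζ)`: for `y` near `x` the
derivative `ζ/y² e^{-ζ/y} g(ζ)` is dominated by a multiple of `ζ e^{-ζ/(2x)}`. -/

open Real MeasureTheory Set Filter

lemma integrableOn_mul_exp_neg_mul_Ioi {b : ℝ} (hb : 0 < b) :
    IntegrableOn (fun ζ : ℝ => ζ * exp (-b * ζ)) (Ioi 0) := by
  simpa using integrableOn_rpow_mul_exp_neg_mul_rpow (s := 1) (p := 1) (by norm_num) one_pos hb

lemma integral_exp_neg_div_Ioi {x : ℝ} (hx : 0 < x) : ∫ ζ in Ioi (0 : ℝ), exp (-ζ / x) = x := by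
  have := integral_comp_mul_left_Ioi (fun t => exp (-t)) 0 (inv_pos.2 hx)
  simp only [mul_zero, integral_exp_neg_Ioi_zero, smul_eq_mul, mul_one, inv_inv] at this
  simpa only [neg_div, div_eq_inv_mul, mul_neg] using this

lemma hasDerivAt_exp_neg_div (ζ : ℝ) {y : ℝ} (hy : y ≠ 0) :
    HasDerivAt (fun t => exp (-ζ / t)) (ζ / y ^ 2 * exp (-ζ / y)) y := by
  have h := ((hasDerivAt_inv hy).const_mul (-ζ)).exp
  convert h using 1
  · ext t; rw [div_eq_mul_inv]
  · rw [div_eq_mul_inv (-ζ)]; ring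

section LaplaceType

variable {g : ℝ → ℝ} {C : ℝ}

lemma integrableOn_exp_neg_div_mul (hg : AEStronglyMeasurable g (volume.restrict (Ioi 0)))
    (hgC : ∀ᵐ ζ ∂volume.restrict (Ioi 0), ‖g ζ‖ ≤ C) {x : ℝ} (hx : 0 < x) :
    IntegrableOn (fun ζ => exp (-ζ / x) * g ζ) (Ioi 0) := by
  refine Integrable.mul_bdd ?_ hg hgC
  simpa only [IntegrableOn, neg_mul, ← neg_div, inv_mul_eq_div] using
    exp_neg_integrableOn_Ioi 0 (inv_pos.2 hx)

lemma integrableOn_mul_exp_neg_div_mul (hg : AEStronglyMeasurable g (volume.restrict (Ioi 0)))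
    (hgC : ∀ᵐ ζ ∂volume.restrict (Ioi 0), ‖g ζ‖ ≤ C) {x : ℝ} (hx : 0 < x) :
    IntegrableOn (fun ζ => ζ * exp (-ζ / x) * g ζ) (Ioi 0) := by
  refine Integrable.mul_bdd ?_ hg hgC
  simpa only [IntegrableOn, neg_mul, ← neg_div, inv_mul_eq_div] using
    integrableOn_mul_exp_neg_mul_Ioi (inv_pos.2 hx)

lemma hasDerivAt_integral_exp_neg_div_mul (hg : AEStronglyMeasurable g (volume.restrict (Ioi 0)))
    (hgC : ∀ᵐ ζ ∂volume.restrict (Ioi 0), ‖g ζ‖ ≤ C) {x : ℝ} (hx : 0 < x) :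
    HasDerivAt (fun y => ∫ ζ in Ioi 0, exp (-ζ / y) * g ζ)
      ((∫ ζ in Ioi 0, ζ * exp (-ζ / x) * g ζ) / x ^ 2) x := by
  have hC : ∀ᵐ ζ ∂volume.restrict (Ioi 0), ∀ y ∈ Ioo (x / 2) (2 * x),
      ‖ζ / y ^ 2 * exp (-ζ / y) * g ζ‖ ≤ (2 / x) ^ 2 * C * (ζ * exp (-(2 * x)⁻¹ * ζ)) := by
    filter_upwards [ae_restrict_mem measurableSet_Ioi, hgC] with ζ (hζ : 0 < ζ) hgζ y ⟨hxy, hyx⟩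
    have hy : 0 < y := by linarith
    calc ‖ζ / y ^ 2 * exp (-ζ / y) * g ζ‖ = ζ / y ^ 2 * exp (-ζ / y) * ‖g ζ‖ := by
          rw [norm_mul, norm_mul, norm_of_nonneg (by positivity), norm_of_nonneg (exp_pos _).le]
      _ ≤ ζ / (x / 2) ^ 2 * exp (-(2 * x)⁻¹ * ζ) * C := by
          gcongr
          rw [neg_div, neg_mul, neg_le_neg_iff, inv_mul_eq_div]
          gcongr
      _ = (2 / x) ^ 2 * C * (ζ * exp (-(2 * x)⁻¹ * ζ)) := by ring
  have hderiv := hasDerivAt_integral_of_dominated_loc_of_deriv_le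
    (F := fun y ζ => exp (-ζ / y) * g ζ) (F' := fun y ζ => ζ / y ^ 2 * exp (-ζ / y) * g ζ)
    (Ioo_mem_nhds (by linarith) (by linarith))
    (Eventually.of_forall fun y =>
      (by fun_prop : Continuous fun ζ => exp (-ζ / y)).aestronglyMeasurable.mul hg)
    (integrableOn_exp_neg_div_mul hg hgC hx)
    ((by fun_prop : Continuous fun ζ => ζ / x ^ 2 * exp (-ζ / x)).aestronglyMeasurable.mul hg)
    hC ((integrableOn_mul_exp_neg_mul_Ioi (by positivity)).const_mul _)
    (Eventually.of_forall fun ζ y ⟨hxy, _⟩ =>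
      (hasDerivAt_exp_neg_div ζ (by linarith)).mul_const (g ζ))
  have hF' : (∫ ζ in Ioi 0, ζ * exp (-ζ / x) * g ζ) / x ^ 2
      = ∫ ζ in Ioi 0, ζ / x ^ 2 * exp (-ζ / x) * g ζ := by
    rw [← integral_div]
    congr 1 with ζ
    ring
  exact hF' ▸ hderiv.2

end LaplaceType

/-- For every `x > 0` the integral `∫₀^∞ e^{-ζ/x}/(1+ζ) dζ` converges, and
`f(x) = ∫₀^∞ e^{-ζ/x}/(1+ζ) dζ` is differentiable on `(0,∞)` and satisfies the
Euler differential equation `x² f'(x) + f(x) = x` there. -/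
theorem euler_integral_solution
    (f : ℝ → ℝ) (hf : ∀ x, f x = ∫ ζ in Ioi (0 : ℝ), Real.exp (-ζ / x) / (1 + ζ)) :
    ∀ x > (0 : ℝ),
      IntegrableOn (fun ζ => Real.exp (-ζ / x) / (1 + ζ)) (Ioi 0) ∧
      ∃ f' : ℝ, HasDerivAt f f' x ∧ x ^ 2 * f' + f x = x := by
  intro x hx
  have hg : AEStronglyMeasurable (fun ζ : ℝ => (1 + ζ)⁻¹) (volume.restrict (Ioi 0)) := by
    fun_prop
  have hg_le : ∀ᵐ ζ ∂volume.restrict (Ioi (0 : ℝ)), ‖(1 + ζ)⁻¹‖ ≤ 1 := by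
    filter_upwards [ae_restrict_mem measurableSet_Ioi] with ζ (hζ : 0 < ζ)
    rw [norm_inv, Real.norm_of_nonneg (by linarith)]
    exact inv_le_one_of_one_le₀ (by linarith)
  have hf_eq : f = fun y => ∫ ζ in Ioi 0, exp (-ζ / y) * (1 + ζ)⁻¹ :=
    funext fun y => by simp only [hf, div_eq_mul_inv]
  simp only [div_eq_mul_inv (exp _)]
  refine ⟨integrableOn_exp_neg_div_mul hg hg_le hx, _,
    hf_eq ▸ hasDerivAt_integral_exp_neg_div_mul hg hg_le hx, ?_⟩
  calc x ^ 2 * ((∫ ζ in Ioi 0, ζ * exp (-ζ / x) * (1 + ζ)⁻¹) / x ^ 2) + f x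
      = ∫ ζ in Ioi 0, (ζ * exp (-ζ / x) * (1 + ζ)⁻¹ + exp (-ζ / x) * (1 + ζ)⁻¹) := by
        rw [mul_div_cancel₀ _ (by positivity), hf_eq, integral_add
          (integrableOn_mul_exp_neg_div_mul hg hg_le hx) (integrableOn_exp_neg_div_mul hg hg_le hx)]
    _ = ∫ ζ in Ioi 0, exp (-ζ / x) := by
        refine setIntegral_congr_fun measurableSet_Ioi fun ζ (hζ : 0 < ζ) => ?_
        field_simp
        ring
    _ = x := integral_exp_neg_div_Ioi hx
end

section
/- (Proposition) Let f(x) = ∫₀^∞ e^{-ζ/x}/(1+ζ) dζ and f_k(x) = ∑_{n=0}^{k-1} (-1)^n n! x^{n+1}. Then for every x > 0 and every natural number k, |f(x) − f_k(x)| ≤ k! · x^{k+1}; i.e., the error of the k-th partial sum of the divergent series is bounded by the first neglected term. -/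
open Real MeasureTheory Set Finset

/-
Expand `1/(1+ζ)` as a finite geometric sum with exact remainder `(-ζ)^k/(1+ζ)`. Against the
weight `e^{-ζ/x}` on `(0,∞)` the moment `ζ^n` integrates to `n! x^{n+1}`, so the sum integrates
to `f_k(x)` and `f(x) - f_k(x)` is the integral of the remainder. Since `|(-ζ)^k/(1+ζ)| ≤ ζ^k`
for `ζ ≥ 0`, that integral is bounded by the `k`-th moment `k! x^{k+1}`.
-/

lemma one_div_one_add_eq_geom_sum_add {ζ : ℝ} (hζ : 1 + ζ ≠ 0) (k : ℕ) :
    1 / (1 + ζ) = ∑ n ∈ range k, (-ζ) ^ n + (-ζ) ^ k / (1 + ζ) := by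
  have hgeom := geom_sum_mul (-ζ) k
  rw [eq_comm, ← eq_sub_iff_add_eq, ← sub_div, eq_div_iff hζ]
  linear_combination -hgeom

lemma norm_neg_pow_div_one_add_mul_exp_le {ζ : ℝ} (hζ : 0 ≤ ζ) (k : ℕ) (t : ℝ) :
    ‖(-ζ) ^ k / (1 + ζ) * exp t‖ ≤ ζ ^ k * exp t := by
  rw [norm_mul, norm_of_nonneg (exp_pos t).le, norm_div, norm_pow, norm_neg, norm_of_nonneg hζ,
    norm_of_nonneg (by linarith)]
  gcongr
  exact div_le_self (by positivity) (by linarith)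

section EulerIntegral

variable {x : ℝ}

lemma integrableOn_pow_mul_exp_neg_div (n : ℕ) (hx : 0 < x) :
    IntegrableOn (fun ζ : ℝ => ζ ^ n * exp (-ζ / x)) (Ioi 0) := by
  refine (integrableOn_rpow_mul_exp_neg_mul_rpow (s := n) (p := 1) (b := 1 / x)
    (by linarith [n.cast_nonneg (α := ℝ)]) one_pos (by positivity)).congr_fun
    (fun ζ _ => ?_) measurableSet_Ioi
  simp only [rpow_one, rpow_natCast]
  ring_nf

lemma integral_pow_mul_exp_neg_div (n : ℕ) (hx : 0 < x) :
    ∫ ζ in Ioi (0 : ℝ), ζ ^ n * exp (-ζ / x) = n.factorial * x ^ (n + 1) := by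
  have h := integral_rpow_mul_exp_neg_mul_Ioi (a := n + 1) (r := 1 / x)
    (by positivity) (by positivity)
  rw [setIntegral_congr_fun measurableSet_Ioi (g := fun ζ => ζ ^ n * exp (-ζ / x))
    (fun ζ _ => by simp only [add_sub_cancel_right, rpow_natCast]; ring_nf)] at h
  rw [h, one_div_one_div, Gamma_nat_eq_factorial, ← Nat.cast_add_one, rpow_natCast]
  ring

lemma integrableOn_neg_pow_div_one_add_mul_exp_neg_div (k : ℕ) (hx : 0 < x) :
    IntegrableOn (fun ζ : ℝ => (-ζ) ^ k / (1 + ζ) * exp (-ζ / x)) (Ioi 0) := by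
  refine (integrableOn_pow_mul_exp_neg_div k hx).mono' ?_ ?_
  · refine ContinuousOn.aestronglyMeasurable ?_ measurableSet_Ioi
    exact ((by fun_prop : Continuous fun ζ : ℝ => (-ζ) ^ k).continuousOn.div (by fun_prop)
      fun ζ (hζ : 0 < ζ) => (add_pos one_pos hζ).ne').mul (by fun_prop)
  · filter_upwards [ae_restrict_mem measurableSet_Ioi] with ζ (hζ : 0 < ζ)
    exact norm_neg_pow_div_one_add_mul_exp_le hζ.le k _

lemma integral_exp_neg_div_div_one_add_sub_partial_sum (k : ℕ) (hx : 0 < x) :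
    (∫ ζ in Ioi (0 : ℝ), exp (-ζ / x) / (1 + ζ)) -
        ∑ n ∈ range k, (-1 : ℝ) ^ n * n.factorial * x ^ (n + 1) =
      ∫ ζ in Ioi (0 : ℝ), (-ζ) ^ k / (1 + ζ) * exp (-ζ / x) := by
  have hmoment (n : ℕ) : IntegrableOn (fun ζ : ℝ => (-1) ^ n * (ζ ^ n * exp (-ζ / x))) (Ioi 0) :=
    (integrableOn_pow_mul_exp_neg_div n hx).const_mul _
  have hsplit : ∀ ζ ∈ Ioi (0 : ℝ), exp (-ζ / x) / (1 + ζ) =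
      ∑ n ∈ range k, (-1) ^ n * (ζ ^ n * exp (-ζ / x)) + (-ζ) ^ k / (1 + ζ) * exp (-ζ / x) := by
    intro ζ (hζ : 0 < ζ)
    rw [div_eq_mul_one_div, one_div_one_add_eq_geom_sum_add (by positivity) k, mul_add, mul_sum]
    congr 1
    · exact sum_congr rfl fun n _ => by rw [neg_pow]; ring
    · ring
  rw [setIntegral_congr_fun measurableSet_Ioi hsplit,
    integral_add (integrable_finsetSum _ fun n _ => hmoment n)
      (integrableOn_neg_pow_div_one_add_mul_exp_neg_div k hx),
    integral_finsetSum _ fun n _ => hmoment n]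
  simp only [integral_const_mul, integral_pow_mul_exp_neg_div _ hx, mul_assoc]
  ring

end EulerIntegral

/-- For `f(x) = ∫₀^∞ e^{-ζ/x}/(1+ζ) dζ` and `f_k(x) = ∑_{n=0}^{k-1} (-1)^n n! x^{n+1}`,
for every `x > 0` and every natural number `k`, `|f(x) − f_k(x)| ≤ k! x^{k+1}`. -/
theorem euler_error_le_first_neglected_term
    (f : ℝ → ℝ) (hf : ∀ x, f x = ∫ ζ in Ioi (0 : ℝ), Real.exp (-ζ / x) / (1 + ζ))
    (fk : ℕ → ℝ → ℝ)
    (hfk : ∀ k x, fk k x = ∑ n ∈ Finset.range k,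
      (-1 : ℝ) ^ n * (Nat.factorial n : ℝ) * x ^ (n + 1))
    (x : ℝ) (hx : 0 < x) (k : ℕ) :
    |f x - fk k x| ≤ (Nat.factorial k : ℝ) * x ^ (k + 1) := by
  rw [hf, hfk, integral_exp_neg_div_div_one_add_sub_partial_sum k hx, ← norm_eq_abs,
    ← integral_pow_mul_exp_neg_div k hx]
  refine norm_integral_le_of_norm_le (integrableOn_pow_mul_exp_neg_div k hx) ?_
  filter_upwards [ae_restrict_mem measurableSet_Ioi] with ζ (hζ : 0 < ζ)
  exact norm_neg_pow_div_one_add_mul_exp_le hζ.le k _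
end

section
/- (Regularity of Borel summation, property (1)) Let (a_n) be a sequence of real numbers with ∑_{n≥0} |a_n| < ∞. Then the Borel transform g(z) = ∑_{n≥0} (a_n/n!) z^n converges for every real z ≥ 0, the integral ∫₀^∞ g(z) e^{-z} dz converges, and ∫₀^∞ g(z) e^{-z} dz = ∑_{n≥0} a_n; i.e., the Borel sum of an (absolutely) convergent series equals its ordinary sum. -/
/-!
Euler's integral gives `∫₀^∞ (a_n / n!) z^n e^{-z} dz = a_n`, and likewise with `|a_n|` for the
absolute values of the terms. Absolute summability of `a` therefore lets the series defining
`g(z) e^{-z}` be integrated term by term (convergence of the series of `L¹` norms), which yields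
both the integrability and the value `∑ a_n`.
-/

open Real MeasureTheory Set

namespace MeasureTheory

variable {α E ι : Type*} [MeasurableSpace α] {μ : Measure α} [NormedAddCommGroup E]
  [CompleteSpace E] [Countable ι]

theorem integrable_tsum_of_summable_integral_norm {F : ι → α → E}
    (hF_int : ∀ i, Integrable (F i) μ) (hF_sum : Summable fun i ↦ ∫ a, ‖F i a‖ ∂μ) :
    Integrable (fun a ↦ ∑' i, F i a) μ := by
  set f : ι → α →₁[μ] E := fun i ↦ (hF_int i).toL1 (F i)
  have hf : ∑' i, ‖f i‖ₑ ≠ ⊤ := by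
    refine tsum_enorm_ne_top_iff_summable_norm.2 ?_
    simpa only [f, L1.norm_of_fun_eq_integral_norm] using hF_sum
  have hfF : ∀ᵐ a ∂μ, ∀ i, f i a = F i a := ae_all_iff.2 fun i ↦ (hF_int i).coeFn_toL1
  refine (L1.integrable_coeFn (∑' i, f i)).congr ?_
  filter_upwards [Lp.coeFn_tsum hf, hfF] with a ha hfa
  simp only [ha, hfa]

end MeasureTheory

open scoped Nat

theorem integrableOn_pow_mul_exp_neg_Ioi (n : ℕ) :
    IntegrableOn (fun z : ℝ ↦ z ^ n * exp (-z)) (Ioi 0) := by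
  refine (GammaIntegral_convergent n.cast_add_one_pos).congr_fun (fun z _ ↦ ?_) measurableSet_Ioi
  dsimp only
  rw [add_sub_cancel_right, rpow_natCast, mul_comm]

theorem integral_pow_mul_exp_neg_Ioi (n : ℕ) :
    ∫ z in Ioi (0 : ℝ), z ^ n * exp (-z) = n ! := by
  rw [← Gamma_nat_eq_factorial, Gamma_eq_integral n.cast_add_one_pos]
  refine setIntegral_congr_fun measurableSet_Ioi fun z _ ↦ ?_
  rw [add_sub_cancel_right, rpow_natCast, mul_comm]

theorem integral_div_factorial_mul_pow_mul_exp_neg_Ioi (c : ℝ) (n : ℕ) :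
    ∫ z in Ioi (0 : ℝ), c / n ! * (z ^ n * exp (-z)) = c := by
  rw [integral_const_mul, integral_pow_mul_exp_neg_Ioi]
  field_simp

theorem integral_norm_div_factorial_mul_pow_mul_exp_neg_Ioi (c : ℝ) (n : ℕ) :
    ∫ z in Ioi (0 : ℝ), ‖c / n ! * (z ^ n * exp (-z))‖ = |c| := by
  rw [← integral_div_factorial_mul_pow_mul_exp_neg_Ioi |c| n]
  refine setIntegral_congr_fun measurableSet_Ioi fun z (hz : 0 < z) ↦ ?_
  rw [norm_mul, norm_div, norm_of_nonneg (by positivity : 0 ≤ z ^ n * exp (-z))]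
  simp

theorem summable_div_factorial_mul_pow {a : ℕ → ℝ} {C : ℝ} (hC : ∀ n, |a n| ≤ C) (z : ℝ) :
    Summable fun n ↦ a n / n ! * z ^ n := by
  refine .of_norm_bounded ((summable_pow_div_factorial |z|).mul_left C) fun n ↦ ?_
  rw [norm_mul, norm_div, norm_pow, Real.norm_eq_abs, Real.norm_eq_abs, Nat.abs_cast,
    div_mul_eq_mul_div, mul_div_assoc]
  exact mul_le_mul_of_nonneg_right (hC n) (by positivity)

/-- Regularity of Borel summation: if `∑ |a_n| < ∞`, then the Borel transform
`g(z) = ∑_{n≥0} (a_n/n!) z^n` converges for every `z ≥ 0`, the integral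
`∫₀^∞ g(z) e^{-z} dz` converges, and it equals the ordinary sum `∑ a_n`. -/
theorem borel_summation_regular
    (a : ℕ → ℝ) (ha : Summable fun n => |a n|)
    (g : ℝ → ℝ) (hg : ∀ z, g z = ∑' n : ℕ, a n / (Nat.factorial n : ℝ) * z ^ n) :
    (∀ z : ℝ, 0 ≤ z → Summable fun n : ℕ => a n / (Nat.factorial n : ℝ) * z ^ n) ∧
    IntegrableOn (fun z => g z * Real.exp (-z)) (Ioi 0) ∧
    (∫ z in Ioi (0 : ℝ), g z * Real.exp (-z)) = ∑' n : ℕ, a n := by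
  set F : ℕ → ℝ → ℝ := fun n z ↦ a n / n ! * (z ^ n * exp (-z))
  have hF_int (n : ℕ) : IntegrableOn (F n) (Ioi 0) :=
    (integrableOn_pow_mul_exp_neg_Ioi n).const_mul _
  have hF_sum : Summable fun n ↦ ∫ z in Ioi (0 : ℝ), ‖F n z‖ := by
    simpa only [F, integral_norm_div_factorial_mul_pow_mul_exp_neg_Ioi] using ha
  have hgF : (fun z ↦ g z * exp (-z)) = fun z ↦ ∑' n, F n z := by
    ext z
    simp only [F, hg, ← mul_assoc, tsum_mul_right]
  refine ⟨fun z _ ↦ summable_div_factorial_mul_pow (fun n ↦ ha.le_tsum n fun _ _ ↦ abs_nonneg _) z,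
    hgF ▸ integrable_tsum_of_summable_integral_norm hF_int hF_sum, ?_⟩
  rw [hgF, ← integral_tsum_of_summable_integral_norm hF_int hF_sum]
  simp only [F, integral_div_factorial_mul_pow_mul_exp_neg_Ioi]
end
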